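/- Let a, b ∈ ℂ. Then there is an open neighborhood U of 0 in ℂ such that the function g(x) = (1 - 4x/3) · ₂F₁(a + 1/3, b + 1/3; 3/2; x(4x-3)²) satisfies Heun's differential equation with parameters (t, q; a', b'; c'; d') = (1/4, (9ab + 3a + 3b - 1)/4; 3a, 3b; 3/2; a+b+1/6) at every x ∈ U with x ∉ {0, 1, 1/4}. -/

import Mathlib

open Complex

/-- `g` satisfies Heun's differential equation with parameters `(t, q; a, b; c; d)`
at the point `x`: `g` is twice complex differentiable at `x` and
`g''(x) + (c/x + d/(x-1) + (a+b-c-d+1)/(x-t)) g'(x) + ((a b x - q)/(x(x-1)(x-t))) g(x) = 0`. -/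
def SatisfiesHeunAt (t q a b c d : ℂ) (g : ℂ → ℂ) (x : ℂ) : Prop :=
  DifferentiableAt ℂ g x ∧ DifferentiableAt ℂ (deriv g) x ∧
    deriv (deriv g) x +
      (c / x + d / (x - 1) + (a + b - c - d + 1) / (x - t)) * deriv g x +
      ((a * b * x - q) / (x * (x - 1) * (x - t))) * g x = 0

/-!
Write the function as `p · (F ∘ φ)` with `p x = 1 - 4x/3`, `φ x = x (4x - 3)²` and
`F = ₂F₁(a + 1/3, b + 1/3; 3/2)`. The chain rule expresses its first two derivatives through
`F`, `F'`, `F''` at `φ x`. Since `φ'(x)² = 9 (4x - 3)² (4x - 1)²` and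
`φ(x) (1 - φ(x)) = -x (x - 1) (4x - 3)² (4x - 1)²`, the hypergeometric equation for `F` at `φ x`
(valid while `‖φ x‖ < 1`) eliminates `F''`, and what remains of Heun's equation is a polynomial
identity. The hypergeometric equation itself is the recurrence
`(n + 1)(n + c) cₙ₊₁ = (n + a)(n + b) cₙ` for the Taylor coefficients of `₂F₁(a, b; c)`.
-/

open FormalMultilinearSeries

section PowerSeries

variable {𝕜 : Type*} [NontriviallyNormedField 𝕜] {c : ℕ → 𝕜} {f : 𝕜 → 𝕜} {x : 𝕜} {r : ENNReal}

theorem HasFPowerSeriesOnBall.deriv_ofScalars [CompleteSpace 𝕜]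
    (hf : HasFPowerSeriesOnBall f (ofScalars 𝕜 c) x r) :
    HasFPowerSeriesOnBall (deriv f) (ofScalars 𝕜 fun n => (n + 1) * c (n + 1)) x r := by
  convert (ContinuousLinearMap.apply 𝕜 𝕜 (1 : 𝕜)).comp_hasFPowerSeriesOnBall hf.fderiv using 1
  · ext; rfl
  ext n
  simp [coeff_ofScalars, nsmul_eq_mul]

theorem HasFPowerSeriesOnBall.hasSum_ofScalars (hf : HasFPowerSeriesOnBall f (ofScalars 𝕜 c) x r)
    {z : 𝕜} (hz : z ∈ Metric.eball 0 r) : HasSum (fun n => c n * z ^ n) (f (x + z)) := by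
  simpa [ofScalars_apply_eq, mul_comm] using hf.hasSum hz

theorem hasSum_of_hasSum_nat_add {G : Type*} [AddCommGroup G] [TopologicalSpace G]
    [IsTopologicalAddGroup G] {g : ℕ → G} {s : G} (k : ℕ)
    (h : HasSum (fun n => g (n + k)) s) (hg : ∀ i < k, g i = 0) : HasSum g s := by
  rw [← hasSum_nat_add_iff' k, Finset.sum_eq_zero fun i hi => hg i (Finset.mem_range.mp hi),
    sub_zero]
  exact h

theorem HasFPowerSeriesOnBall.hypergeometric_ode [CompleteSpace 𝕜] {a b c₀ : 𝕜}
    (hf : HasFPowerSeriesOnBall f (ofScalars 𝕜 c) 0 r)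
    (hc : ∀ n : ℕ, (n + 1) * (n + c₀) * c (n + 1) = (n + a) * (n + b) * c n)
    {z : 𝕜} (hz : z ∈ Metric.eball 0 r) :
    z * (1 - z) * deriv (deriv f) z + (c₀ - (a + b + 1) * z) * deriv f z - a * b * f z = 0 := by
  have hf' := hf.deriv_ofScalars
  have s0 := hf.hasSum_ofScalars hz
  have s1 := hf'.hasSum_ofScalars hz
  have s2 := hf'.deriv_ofScalars.hasSum_ofScalars hz
  simp only [zero_add] at s0 s1 s2
  have t1 : HasSum (fun m : ℕ => m * (m + 1) * c (m + 1) * z ^ m) (z * deriv (deriv f) z) :=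
    hasSum_of_hasSum_nat_add 1 ((s2.mul_left z).congr_fun fun n => by push_cast; ring) (by simp)
  have t2 : HasSum (fun m : ℕ => (m - 1) * m * c m * z ^ m) (z ^ 2 * deriv (deriv f) z) :=
    hasSum_of_hasSum_nat_add 2 ((s2.mul_left (z ^ 2)).congr_fun fun n => by push_cast; ring)
      (by intro i hi; interval_cases i <;> simp)
  have t3 : HasSum (fun m : ℕ => m * c m * z ^ m) (z * deriv f z) :=
    hasSum_of_hasSum_nat_add 1 ((s1.mul_left z).congr_fun fun n => by push_cast; ring) (by simp)
  have total := (((t1.sub t2).add (s1.mul_left c₀)).sub (t3.mul_left (a + b + 1))).sub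
    (s0.mul_left (a * b))
  have hzero : ∀ m : ℕ, m * (m + 1) * c (m + 1) * z ^ m - (m - 1) * m * c m * z ^ m
      + c₀ * ((m + 1) * c (m + 1) * z ^ m) - (a + b + 1) * (m * c m * z ^ m)
      - a * b * (c m * z ^ m) = 0 := fun m => by linear_combination z ^ m * hc m
  simp only [hzero] at total
  linear_combination total.unique hasSum_zero

end PowerSeries

section Hypergeometric

variable {𝕂 : Type*} [RCLike 𝕂]

theorem one_le_radius_ordinaryHypergeometricSeries (𝔸 : Type*) [NormedDivisionRing 𝔸]
    [NormedAlgebra 𝕂 𝔸] (a b c : 𝕂) : 1 ≤ (ordinaryHypergeometricSeries 𝔸 a b c).radius := by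
  by_cases ha : ∃ k : ℕ, a = -k
  · obtain ⟨k, rfl⟩ := ha
    simp [ordinaryHypergeometric_radius_top_of_neg_nat₁]
  by_cases hb : ∃ k : ℕ, b = -k
  · obtain ⟨k, rfl⟩ := hb
    simp [ordinaryHypergeometric_radius_top_of_neg_nat₂]
  by_cases hc : ∃ k : ℕ, c = -k
  · obtain ⟨k, rfl⟩ := hc
    simp [ordinaryHypergeometric_radius_top_of_neg_nat₃]
  simp only [not_exists] at ha hb hc
  rw [ordinaryHypergeometricSeries_radius_eq_one]
  exact fun k => ⟨fun h => ha k (by rw [h, neg_neg]), fun h => hb k (by rw [h, neg_neg]),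
    fun h => hc k (by rw [h, neg_neg])⟩

theorem hasFPowerSeriesOnBall_ordinaryHypergeometric (a b c : 𝕂) :
    HasFPowerSeriesOnBall (ordinaryHypergeometric (𝔸 := 𝕂) a b c)
      (ordinaryHypergeometricSeries 𝕂 a b c) 0 1 :=
  ((ordinaryHypergeometricSeries 𝕂 a b c).hasFPowerSeriesOnBall
    (one_pos.trans_le (one_le_radius_ordinaryHypergeometricSeries 𝕂 a b c))).mono one_pos
    (one_le_radius_ordinaryHypergeometricSeries 𝕂 a b c)

theorem mem_eball_zero_one_of_norm_lt_one {z : 𝕂} (hz : ‖z‖ < 1) : z ∈ Metric.eball (0 : 𝕂) 1 := by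
  rw [Metric.mem_eball, edist_zero_right, enorm_eq_nnnorm]
  exact_mod_cast hz

theorem analyticAt_ordinaryHypergeometric (a b c : 𝕂) {z : 𝕂} (hz : ‖z‖ < 1) :
    AnalyticAt 𝕂 (ordinaryHypergeometric (𝔸 := 𝕂) a b c) z :=
  (hasFPowerSeriesOnBall_ordinaryHypergeometric a b c).analyticAt_of_mem
    (mem_eball_zero_one_of_norm_lt_one hz)

theorem ordinaryHypergeometricCoefficient_succ (a b c : 𝕂) (n : ℕ) (hc : c + n ≠ 0) :
    (n + 1) * (n + c) * ordinaryHypergeometricCoefficient a b c (n + 1)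
      = (n + a) * (n + b) * ordinaryHypergeometricCoefficient a b c n := by
  have hn : (n + 1 : 𝕂) ≠ 0 := by exact_mod_cast n.succ_ne_zero
  simp only [ordinaryHypergeometricCoefficient, Nat.factorial_succ, ascPochhammer_succ_eval,
    Nat.cast_mul, Nat.cast_succ, mul_inv]
  field_simp
  ring

theorem ordinaryHypergeometric_ode {a b c z : 𝕂} (hc : ∀ n : ℕ, c ≠ -n) (hz : ‖z‖ < 1) :
    z * (1 - z) * deriv (deriv (ordinaryHypergeometric (𝔸 := 𝕂) a b c)) z
      + (c - (a + b + 1) * z) * deriv (ordinaryHypergeometric (𝔸 := 𝕂) a b c) z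
      - a * b * ordinaryHypergeometric (𝔸 := 𝕂) a b c z = 0 :=
  (hasFPowerSeriesOnBall_ordinaryHypergeometric a b c).hypergeometric_ode
    (fun n => ordinaryHypergeometricCoefficient_succ a b c n
      fun h => hc n (eq_neg_of_add_eq_zero_left h))
    (mem_eball_zero_one_of_norm_lt_one hz)

end Hypergeometric

section ChainRule

variable {𝕜 : Type*} [NontriviallyNormedField 𝕜]

theorem hasDerivAt_mul_comp {p φ F : 𝕜 → 𝕜} {p' φ' x : 𝕜} (hp : HasDerivAt p p' x)
    (hφ : HasDerivAt φ φ' x) (hF : DifferentiableAt 𝕜 F (φ x)) :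
    HasDerivAt (fun y => p y * F (φ y)) (p' * F (φ x) + p x * (deriv F (φ x) * φ')) x :=
  hp.fun_mul (hF.hasDerivAt.comp x hφ)

theorem hasDerivAt_deriv_mul_comp [CompleteSpace 𝕜] {p p' φ φ' F : 𝕜 → 𝕜} {p'' φ'' x : 𝕜}
    (hp : ∀ y, HasDerivAt p (p' y) y) (hp' : HasDerivAt p' p'' x)
    (hφ : ∀ y, HasDerivAt φ (φ' y) y) (hφ' : HasDerivAt φ' φ'' x) (hF : AnalyticAt 𝕜 F (φ x)) :
    HasDerivAt (deriv fun y => p y * F (φ y))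
      (p'' * F (φ x) + 2 * p' x * (deriv F (φ x) * φ' x)
        + p x * (deriv (deriv F) (φ x) * φ' x ^ 2 + deriv F (φ x) * φ'')) x := by
  have hFφ : ∀ᶠ y in nhds x, AnalyticAt 𝕜 F (φ y) :=
    (hφ x).continuousAt.tendsto.eventually hF.eventually_analyticAt
  have hderiv : (deriv fun y => p y * F (φ y))
      =ᶠ[nhds x] fun y => p' y * F (φ y) + p y * (deriv F (φ y) * φ' y) :=
    hFφ.mono fun y hy => (hasDerivAt_mul_comp (hp y) (hφ y) hy.differentiableAt).deriv
  have hF'φ : HasDerivAt (fun y => deriv F (φ y)) (deriv (deriv F) (φ x) * φ' x) x :=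
    hF.deriv.differentiableAt.hasDerivAt.comp x (hφ x)
  refine HasDerivAt.congr_of_eventuallyEq ?_ hderiv
  exact ((hasDerivAt_mul_comp hp' (hφ x) hF.differentiableAt).add
    ((hp x).fun_mul (hF'φ.fun_mul hφ'))).congr_deriv (by ring)

end ChainRule

theorem heun_lhs_eq_zero_of_hypergeometric_ode {a b x u v w : ℂ} (hx0 : x ≠ 0) (hx1 : x ≠ 1)
    (hx4 : x ≠ 1 / 4)
    (hode : x * (4 * x - 3) ^ 2 * (1 - x * (4 * x - 3) ^ 2) * w
      + (3 / 2 - (a + 1 / 3 + (b + 1 / 3) + 1) * (x * (4 * x - 3) ^ 2)) * v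
      - (a + 1 / 3) * (b + 1 / 3) * u = 0) :
    (0 * u + 2 * (-4 / 3) * (v * ((4 * x - 3) * (12 * x - 3)))
        + (1 - 4 * x / 3) * (w * ((4 * x - 3) * (12 * x - 3)) ^ 2 + v * (96 * x - 48)))
      + (3 / 2 / x + (a + b + 1 / 6) / (x - 1)
          + (3 * a + 3 * b - 3 / 2 - (a + b + 1 / 6) + 1) / (x - 1 / 4))
        * (-4 / 3 * u + (1 - 4 * x / 3) * (v * ((4 * x - 3) * (12 * x - 3))))
      + ((3 * a * (3 * b) * x - (9 * a * b + 3 * a + 3 * b - 1) / 4) / (x * (x - 1) * (x - 1 / 4)))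
        * ((1 - 4 * x / 3) * u) = 0 := by
  have h1 : x - 1 ≠ 0 := sub_ne_zero.mpr hx1
  have h4 : 4 * x - 1 ≠ 0 := fun h => hx4 (by linear_combination h / 4)
  field_simp
  linear_combination -108 * (3 - 4 * x) * (4 * x - 1) * hode

theorem stmt11 (a b : ℂ) :
    ∃ U : Set ℂ, IsOpen U ∧ (0 : ℂ) ∈ U ∧ ∀ x ∈ U, x ≠ (0 : ℂ) → x ≠ (1 : ℂ) → x ≠ (1/4 : ℂ) →
      SatisfiesHeunAt (1/4) ((9*a*b + 3*a + 3*b - 1)/4) (3*a) (3*b) (3/2) (a + b + 1/6)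
        (fun x : ℂ => (1 - 4*x/3) * ordinaryHypergeometric (a + 1/3) (b + 1/3) (3/2) (x*(4*x-3)^2)) x := by
  refine ⟨{x | ‖x * (4 * x - 3) ^ 2‖ < 1}, isOpen_lt (by fun_prop) continuous_const,
    by norm_num, fun x hx hx0 hx1 hx4 => ?_⟩
  have hc : ∀ n : ℕ, (3 / 2 : ℂ) ≠ -n := fun n h => by
    have := congrArg re h
    norm_num at this
    linarith [n.cast_nonneg (α := ℝ)]
  have hF := analyticAt_ordinaryHypergeometric (a + 1 / 3) (b + 1 / 3) (3 / 2) hx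
  have hp : ∀ y : ℂ, HasDerivAt (fun y => 1 - 4 * y / 3) (-4 / 3) y := fun y =>
    ((((hasDerivAt_id' y).const_mul 4).div_const 3).const_sub 1).congr_deriv (by ring)
  have hφ : ∀ y : ℂ, HasDerivAt (fun y => y * (4 * y - 3) ^ 2) ((4 * y - 3) * (12 * y - 3)) y :=
    fun y => ((hasDerivAt_id' y).fun_mul
      ((((hasDerivAt_id' y).const_mul 4).sub_const 3).fun_pow 2)).congr_deriv (by ring)
  have hφ' : HasDerivAt (fun y => (4 * y - 3) * (12 * y - 3)) (96 * x - 48) x :=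
    ((((hasDerivAt_id' x).const_mul 4).sub_const 3).fun_mul
      (((hasDerivAt_id' x).const_mul 12).sub_const 3)).congr_deriv (by ring)
  have hg := hasDerivAt_mul_comp (hp x) (hφ x) hF.differentiableAt
  have hg' := hasDerivAt_deriv_mul_comp hp (hasDerivAt_const x (-4 / 3 : ℂ)) hφ hφ' hF
  refine ⟨hg.differentiableAt, hg'.differentiableAt, ?_⟩
  rw [hg'.deriv, hg.deriv]
  exact heun_lhs_eq_zero_of_hypergeometric_ode hx0 hx1 hx4 (ordinaryHypergeometric_ode hc hx)
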